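/- Let h: ℝ² → ℝ be smooth with arguments written (x,v), and write h' = ∂h/∂v. For a smooth f: ℝ² → ℝ define Df(x,v,w) = ∂ₓf(x,v) + w·(∂f/∂v)(x,v) and D²f(x,v,w,w₃) = ∂ₓ²f(x,v) + 2w·∂ₓ∂ᵥf(x,v) + w²·∂ᵥ²f(x,v) + w₃·(∂f/∂v)(x,v). Then the following three functions of (x,v,w,w₃) ∈ ℝ⁴ vanish identically: h·h', h·D(h') − 2(Dh)·h', and h·D²(h') − (Dh)·(D(h')) − (D²h)·h', if and only if ∂h/∂v ≡ 0 on ℝ². -/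

import Mathlib

/-- Partial derivative in the first variable of a function of two real variables. -/
noncomputable def pdx (f : ℝ → ℝ → ℝ) : ℝ → ℝ → ℝ := fun x y => deriv (fun t => f t y) x

/-- Partial derivative in the second variable of a function of two real variables. -/
noncomputable def pdy (f : ℝ → ℝ → ℝ) : ℝ → ℝ → ℝ := fun x y => deriv (fun t => f x t) y

lemma pdx_zero : pdx (fun _ _ => (0:ℝ)) = fun _ _ => 0 := by
  funext x y; simp [pdx]

lemma pdy_zero : pdy (fun _ _ => (0:ℝ)) = fun _ _ => 0 := by
  funext x y; simp [pdy]

/-- The criterion that `B₁ = (1/2)D_x(h)p_x + h·p_{xx}` is a Poisson structure on the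
2D wave equation: the three coefficients of `⟦B₁,B₁⟧` vanish identically iff `∂h/∂v ≡ 0`. -/
theorem wave_poisson_criterion
    (h : ℝ → ℝ → ℝ)
    (hh : ContDiff ℝ (⊤ : ℕ∞) fun z : ℝ × ℝ => h z.1 z.2)
    (D : (ℝ → ℝ → ℝ) → ℝ → ℝ → ℝ → ℝ)
    (D2 : (ℝ → ℝ → ℝ) → ℝ → ℝ → ℝ → ℝ → ℝ)
    (Ddef : ∀ (f : ℝ → ℝ → ℝ) (x v w : ℝ), D f x v w = pdx f x v + w * pdy f x v)
    (D2def : ∀ (f : ℝ → ℝ → ℝ) (x v w w₃ : ℝ), D2 f x v w w₃ =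
      pdx (pdx f) x v + 2 * w * pdx (pdy f) x v + w ^ 2 * pdy (pdy f) x v
        + w₃ * pdy f x v) :
    ((∀ x v w w₃ : ℝ, h x v * pdy h x v = 0) ∧
     (∀ x v w w₃ : ℝ, h x v * D (pdy h) x v w - 2 * D h x v w * pdy h x v = 0) ∧
     (∀ x v w w₃ : ℝ, h x v * D2 (pdy h) x v w w₃ - D h x v w * D (pdy h) x v w
        - D2 h x v w w₃ * pdy h x v = 0))
    ↔ (∀ x v : ℝ, pdy h x v = 0) := by
  constructor
  · rintro ⟨h1, -, -⟩ x v
    -- g is h with first argument fixed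
    set g : ℝ → ℝ := fun t => h x t with hgdef
    have hg : Differentiable ℝ g := by
      have : g = (fun z : ℝ × ℝ => h z.1 z.2) ∘ (fun t => (x, t)) := rfl
      rw [this]
      exact (hh.differentiable (by simp)).comp ((differentiable_const x).prodMk differentiable_id)
    have key : ∀ t : ℝ, g t * deriv g t = 0 := fun t => h1 x t 0 0
    have hsq : ∀ t : ℝ, deriv (fun s => g s ^ 2) t = 0 := by
      intro t
      rw [((hg t).hasDerivAt.fun_pow 2).deriv]
      have := key t
      push_cast
      ring_nf
      ring_nf at this
      linarith [this]
    have hconst : ∀ a b : ℝ, g a ^ 2 = g b ^ 2 := fun a b =>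
      is_const_of_deriv_eq_zero (fun t => (hg t).pow 2) hsq a b
    show deriv g v = 0
    by_cases hv : g v = 0
    · have hall : ∀ t, g t = 0 := by
        intro t
        have := hconst t v
        rw [hv] at this
        simpa [pow_eq_zero_iff] using this
      have : g = fun _ => (0:ℝ) := funext hall
      rw [this, deriv_const']
    · have := key v
      rcases mul_eq_zero.mp this with h0 | h0
      · exact absurd h0 hv
      · exact h0
  · intro hz
    have hpy : pdy h = fun _ _ => (0:ℝ) := funext fun x => funext fun v => hz x v
    refine ⟨fun x v w w₃ => by rw [hpy]; exact mul_zero _, fun x v w w₃ => ?_, fun x v w w₃ => ?_⟩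
    · rw [Ddef, Ddef, hpy, pdx_zero, pdy_zero]
      ring
    · rw [D2def, D2def, Ddef, Ddef, hpy, pdx_zero, pdy_zero, pdx_zero, pdy_zero]
      ring
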